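/- arXiv:1101.0897 — 11 statements merged into one kernel-verified Lean document; each statement's English description precedes it below -/
import Mathlib

section
/- Let A_1,...,A_d be N×N complex matrices, σ_1,...,σ_d ∈ ℂ, and define the dN×dN matrix L̃(τ,ξ) whose (j,k) block is ξ_j A_j + δ_{jk}(τ + σ_j) I_N. Then det L̃(τ,ξ) = det L_1( ∏_{j=1}^d (τ+σ_j), ξ_1 ∏_{j≠1}(τ+σ_j), ..., ξ_d ∏_{j≠d}(τ+σ_j) ), where L_1(s, η) = s I_N + Σ_l η_l A_l, provided all τ + σ_j ≠ 0. (By polynomial identity this extends to all τ.) -/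
/-!
Write the split symbol as `D + U V`, where `D` is the diagonal of the absorptions `τ + σⱼ`
(each repeated `N` times), `U` stacks the blocks `ξⱼ Aⱼ` and `V = [I ⋯ I]` sums the block rows.
The matrix determinant lemma gives `det (D + U V) = det D · det (I + V D⁻¹ U)` with
`V D⁻¹ U = ∑ⱼ (τ + σⱼ)⁻¹ ξⱼ Aⱼ`, and `det D = (∏ⱼ (τ + σⱼ))ᴺ` is exactly the factor that clears
these denominators inside the `N × N` determinant.
-/

open Matrix

section BlockStack

variable {R ι n : Type*} [DecidableEq ι] [DecidableEq n]

def stackBlocks (B : ι → Matrix n n R) : Matrix (ι × n) n R :=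
  of fun p b => B p.1 p.2 b

def sumBlocks [Zero R] [One R] : Matrix n (ι × n) R :=
  of fun a p => if a = p.2 then 1 else 0

variable [CommRing R] [Fintype n]

theorem of_blocks_add_diagonal_eq_diagonal_add_stackBlocks_mul_sumBlocks
    (B : ι → Matrix n n R) (c : ι → R) :
    of (fun p q : ι × n => B p.1 p.2 q.2 + if p = q then c p.1 else 0)
      = diagonal (fun p => c p.1) + stackBlocks B * (sumBlocks : Matrix n (ι × n) R) := by
  ext p q
  simp [stackBlocks, sumBlocks, mul_apply, diagonal_apply, add_comm]

variable [Fintype ι]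

theorem sumBlocks_mul_diagonal_mul_stackBlocks (w : ι → R) (B : ι → Matrix n n R) :
    (sumBlocks : Matrix n (ι × n) R) * diagonal (fun p : ι × n => w p.1) * stackBlocks B
      = ∑ i, w i • B i := by
  ext a b
  rw [mul_apply, Fintype.sum_prod_type]
  simp [mul_diagonal, sumBlocks, stackBlocks, Matrix.sum_apply]

theorem det_diagonal_fst (c : ι → R) :
    det (diagonal fun p : ι × n => c p.1) = (∏ i, c i) ^ Fintype.card n := by
  simp [det_diagonal, Fintype.prod_prod_type, Finset.prod_pow]

end BlockStack

section Field

variable {K ι n : Type*} [Field K] [Fintype ι] [DecidableEq ι] [DecidableEq n]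

theorem det_of_blocks_add_diagonal [Fintype n] (B : ι → Matrix n n K) (c : ι → K)
    (hc : ∀ i, c i ≠ 0) :
    det (of fun p q : ι × n => B p.1 p.2 q.2 + if p = q then c p.1 else 0)
      = (∏ i, c i) ^ Fintype.card n * det (1 + ∑ i, (c i)⁻¹ • B i) := by
  have hD : IsUnit (det (diagonal fun p : ι × n => c p.1)) := by
    rw [det_diagonal_fst]
    exact (isUnit_iff_ne_zero.mpr (Finset.prod_ne_zero_iff.mpr fun i _ => hc i)).pow _
  have hDinv : (diagonal fun p : ι × n => c p.1)⁻¹ = diagonal fun p => (c p.1)⁻¹ :=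
    inv_eq_right_inv (by simp [hc])
  rw [of_blocks_add_diagonal_eq_diagonal_add_stackBlocks_mul_sumBlocks, det_add_mul _ _ hD,
    det_diagonal_fst, hDinv, sumBlocks_mul_diagonal_mul_stackBlocks fun i => (c i)⁻¹]

theorem prod_smul_one_add_sum_smul (c a : ι → K) (hc : ∀ i, c i ≠ 0) (B : ι → Matrix n n K) :
    (∏ i, c i) • (1 : Matrix n n K) + ∑ l, (a l * ∏ j ∈ Finset.univ.erase l, c j) • B l
      = (∏ i, c i) • (1 + ∑ l, ((c l)⁻¹ * a l) • B l) := by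
  rw [smul_add, Finset.smul_sum]
  congr 1
  refine Finset.sum_congr rfl fun l _ => ?_
  rw [smul_smul, ← Finset.mul_prod_erase _ c (Finset.mem_univ l)]
  field_simp [hc l]

end Field

/-- Determinant identity for the Bérenger split symbol with absorptions:
`det L̃(τ,ξ) = det L₁(∏(τ+σⱼ), ξ₁∏_{j≠1}(τ+σⱼ), …, ξ_d∏_{j≠d}(τ+σⱼ))`,
where `L₁(s,η) = sI + Σ ηₗ Aₗ`, provided each `τ + σⱼ ≠ 0`. -/
theorem berenger_split_det_absorption (N d : ℕ)
    (A : Fin d → Matrix (Fin N) (Fin N) ℂ)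
    (σ : Fin d → ℂ) (τ : ℂ) (ξ : Fin d → ℂ)
    (hτσ : ∀ j, τ + σ j ≠ 0) :
    Matrix.det (Matrix.of fun p q : Fin d × Fin N =>
        ξ p.1 * A p.1 p.2 q.2 + if p = q then τ + σ p.1 else 0)
      = Matrix.det ((∏ j, (τ + σ j)) • (1 : Matrix (Fin N) (Fin N) ℂ)
          + ∑ l, (ξ l * ∏ j ∈ Finset.univ.erase l, (τ + σ j)) • A l) := by
  have hsplit := det_of_blocks_add_diagonal (fun l => ξ l • A l) (fun j => τ + σ j) hτσ
  simp only [smul_smul, Fintype.card_fin] at hsplit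
  rw [prod_smul_one_add_sum_smul _ ξ hτσ, det_smul, Fintype.card_fin]
  exact hsplit
end

section
/- Let L_1(τ,ξ) = τI + Σ ξ_l A_l and let L̃_1(τ,ξ) be the Bérenger split symbol with (j,k) block ξ_j A_j + δ_{jk}τI. Suppose τ ≠ 0 and (τ,ξ) is in the characteristic variety of L (i.e. det L_1(τ,ξ)=0). Then the map S : (Φ_1,...,Φ_d) ↦ -Σ_j Φ_j is a linear bijection from Ker L̃_1(τ,ξ) onto Ker L_1(τ,ξ), with inverse Φ ↦ ((ξ_1/τ)A_1Φ, ..., (ξ_d/τ)A_dΦ). -/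
/-!
Summing the `d` block equations of `L̃₁ Φ̃ = 0` gives `L₁(ΣΦⱼ) = 0`, while each single
equation, divided by `τ`, recovers `Φₗ = -(ξₗ/τ) Aₗ ΣΦⱼ`; so an element of `Ker L̃₁` is
determined by its sum. Conversely `L₁ Φ = 0` says `Σ (ξⱼ/τ) Aⱼ Φ = -Φ`, which is exactly what
makes `((ξₗ/τ) Aₗ Φ)ₗ` a kernel element of `L̃₁` with sum `-Φ`.
-/

open Matrix

namespace Berenger

variable {K ι n : Type*} [Field K] [Fintype ι] [Fintype n]
  (A : ι → Matrix n n K) (τ : K) (ξ : ι → K)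

/-- `Φ̃ ∈ Ker L̃₁(τ,ξ)`. -/
def InSplitKernel (Φt : ι → n → K) : Prop :=
  ∀ l, τ • Φt l + ξ l • A l *ᵥ ∑ j, Φt j = 0

variable {A τ ξ}

theorem InSplitKernel.eq_neg_smul_mulVec_sum (hτ : τ ≠ 0) {Φt : ι → n → K}
    (h : InSplitKernel A τ ξ Φt) (l : ι) :
    Φt l = -(ξ l / τ) • A l *ᵥ ∑ j, Φt j := by
  have hl : τ • Φt l = τ • (-(ξ l / τ) • A l *ᵥ ∑ j, Φt j) := by
    rw [smul_smul, mul_neg, mul_div_cancel₀ _ hτ, neg_smul]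
    exact eq_neg_of_add_eq_zero_left (h l)
  exact smul_right_injective _ hτ hl

theorem InSplitKernel.ext_of_sum_eq (hτ : τ ≠ 0) {Φt Ψt : ι → n → K}
    (hΦ : InSplitKernel A τ ξ Φt) (hΨ : InSplitKernel A τ ξ Ψt)
    (hsum : ∑ j, Φt j = ∑ j, Ψt j) : Φt = Ψt := by
  funext l
  rw [hΦ.eq_neg_smul_mulVec_sum hτ, hΨ.eq_neg_smul_mulVec_sum hτ, hsum]

variable [DecidableEq n]

theorem symbol_mulVec (v : n → K) :
    (τ • (1 : Matrix n n K) + ∑ l, ξ l • A l) *ᵥ v = τ • v + ∑ l, ξ l • A l *ᵥ v := by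
  simp only [add_mulVec, smul_mulVec, one_mulVec, sum_mulVec]

theorem InSplitKernel.symbol_mulVec_sum {Φt : ι → n → K} (h : InSplitKernel A τ ξ Φt) :
    (τ • (1 : Matrix n n K) + ∑ l, ξ l • A l) *ᵥ ∑ j, Φt j = 0 := by
  calc (τ • (1 : Matrix n n K) + ∑ l, ξ l • A l) *ᵥ ∑ j, Φt j
      = ∑ l, (τ • Φt l + ξ l • A l *ᵥ ∑ j, Φt j) := by
        rw [symbol_mulVec, Finset.sum_add_distrib, Finset.smul_sum]
    _ = 0 := Finset.sum_eq_zero fun l _ => h l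

theorem sum_div_smul_mulVec_of_symbol_mulVec_eq_zero (hτ : τ ≠ 0) {Φ : n → K}
    (hΦ : (τ • (1 : Matrix n n K) + ∑ l, ξ l • A l) *ᵥ Φ = 0) :
    ∑ j, (ξ j / τ) • A j *ᵥ Φ = -Φ := by
  rw [symbol_mulVec] at hΦ
  calc ∑ j, (ξ j / τ) • A j *ᵥ Φ = τ⁻¹ • ∑ j, ξ j • A j *ᵥ Φ := by
        simp only [Finset.smul_sum, smul_smul, div_eq_inv_mul]
    _ = τ⁻¹ • -(τ • Φ) := by rw [eq_neg_of_add_eq_zero_right hΦ]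
    _ = -Φ := by rw [smul_neg, inv_smul_smul₀ hτ]

theorem inSplitKernel_div_smul_mulVec (hτ : τ ≠ 0) {Φ : n → K}
    (hΦ : (τ • (1 : Matrix n n K) + ∑ l, ξ l • A l) *ᵥ Φ = 0) :
    InSplitKernel A τ ξ fun l => (ξ l / τ) • A l *ᵥ Φ := by
  intro l
  rw [sum_div_smul_mulVec_of_symbol_mulVec_eq_zero hτ hΦ, smul_smul,
    mul_div_cancel₀ _ hτ, mulVec_neg, smul_neg, add_neg_cancel]

end Berenger

open Berenger in
theorem berenger_kernel_bijection_general (N d : ℕ)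
    (A : Fin d → Matrix (Fin N) (Fin N) ℂ)
    (τ : ℂ) (hτ : τ ≠ 0) (ξ : Fin d → ℂ) :
    -- S maps Ker L̃₁ into Ker L₁
    (∀ Φt : Fin d → Fin N → ℂ,
        (∀ l, τ • Φt l + ξ l • (A l).mulVec (∑ j, Φt j) = 0) →
        (τ • (1 : Matrix (Fin N) (Fin N) ℂ) + ∑ l, ξ l • A l).mulVec (-∑ j, Φt j) = 0)
    ∧
    -- S is injective on Ker L̃₁
    (∀ Φt Ψt : Fin d → Fin N → ℂ,
        (∀ l, τ • Φt l + ξ l • (A l).mulVec (∑ j, Φt j) = 0) →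
        (∀ l, τ • Ψt l + ξ l • (A l).mulVec (∑ j, Ψt j) = 0) →
        (-∑ j, Φt j) = (-∑ j, Ψt j) → Φt = Ψt)
    ∧
    -- the claimed inverse maps Ker L₁ into Ker L̃₁ and is a right inverse of S
    (∀ Φ : Fin N → ℂ,
        (τ • (1 : Matrix (Fin N) (Fin N) ℂ) + ∑ l, ξ l • A l).mulVec Φ = 0 →
        (∀ l, τ • ((ξ l / τ) • (A l).mulVec Φ)
            + ξ l • (A l).mulVec (∑ j, (ξ j / τ) • (A j).mulVec Φ) = 0)
        ∧ (-∑ j, (ξ j / τ) • (A j).mulVec Φ) = Φ) := by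
  refine ⟨fun Φt h => ?_, fun Φt Ψt hΦ hΨ hsum => ?_, fun Φ hΦ => ⟨?_, ?_⟩⟩
  · rw [mulVec_neg, InSplitKernel.symbol_mulVec_sum h, neg_zero]
  · exact InSplitKernel.ext_of_sum_eq hτ hΦ hΨ (neg_injective hsum)
  · exact inSplitKernel_div_smul_mulVec hτ hΦ
  · rw [sum_div_smul_mulVec_of_symbol_mulVec_eq_zero hτ hΦ, neg_neg]

/-- For `τ ≠ 0` with `(τ,ξ)` in the characteristic variety of `L`, the map
`S : (Φ₁,…,Φ_d) ↦ -ΣΦⱼ` is a linear bijection from `Ker L̃₁(τ,ξ)` onto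
`Ker L₁(τ,ξ)`, with inverse `Φ ↦ ((ξ₁/τ)A₁Φ, …, (ξ_d/τ)A_dΦ)`. -/
theorem berenger_kernel_bijection (N d : ℕ)
    (A : Fin d → Matrix (Fin N) (Fin N) ℂ)
    (τ : ℂ) (hτ : τ ≠ 0) (ξ : Fin d → ℂ)
    (hchar : Matrix.det (τ • (1 : Matrix (Fin N) (Fin N) ℂ) + ∑ l, ξ l • A l) = 0) :
    -- S maps Ker L̃₁ into Ker L₁
    (∀ Φt : Fin d → Fin N → ℂ,
        (∀ l, τ • Φt l + ξ l • (A l).mulVec (∑ j, Φt j) = 0) →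
        (τ • (1 : Matrix (Fin N) (Fin N) ℂ) + ∑ l, ξ l • A l).mulVec (-∑ j, Φt j) = 0)
    ∧
    -- S is injective on Ker L̃₁
    (∀ Φt Ψt : Fin d → Fin N → ℂ,
        (∀ l, τ • Φt l + ξ l • (A l).mulVec (∑ j, Φt j) = 0) →
        (∀ l, τ • Ψt l + ξ l • (A l).mulVec (∑ j, Ψt j) = 0) →
        (-∑ j, Φt j) = (-∑ j, Ψt j) → Φt = Ψt)
    ∧
    -- the claimed inverse maps Ker L₁ into Ker L̃₁ and is a right inverse of S
    (∀ Φ : Fin N → ℂ,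
        (τ • (1 : Matrix (Fin N) (Fin N) ℂ) + ∑ l, ξ l • A l).mulVec Φ = 0 →
        (∀ l, τ • ((ξ l / τ) • (A l).mulVec Φ)
            + ξ l • (A l).mulVec (∑ j, (ξ j / τ) • (A j).mulVec Φ) = 0)
        ∧ (-∑ j, (ξ j / τ) • (A j).mulVec Φ) = Φ) :=
  berenger_kernel_bijection_general N d A τ hτ ξ
end

section
/- With L_1 and L̃_1 as in Bérenger's splitting and τ ≠ 0: the kernel of L̃_1(τ,ξ)* consists exactly of vectors (Φ,Φ,...,Φ) with Φ ∈ Ker L_1(τ,ξ)*, and the range of L̃_1(τ,ξ) equals the set of (Ψ_1,...,Ψ_d) such that ⟨Σ_j Ψ_j, Φ⟩ = 0 for all Φ ∈ Ker L_1(τ,ξ)*. -/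
/-!
Write `S Φ = (ξ_l A_l Φ)_l` (`stackBlocks`) and `Σ (Ψ_l)_l = Σ_l Ψ_l` (`sumBlocks`), so that
`L̃₁ = τ + S Σ` and `L₁ = τ + Σ S`. For `τ ≠ 0`, the kernel of `τ + B C` is the image under `B` of
the kernel of `τ + C B`: if `(τ + B C) x = 0` then `x = B (-τ⁻¹ C x)`, and `C` intertwines the two
operators. Applied to the adjoints `τ̄ + Σ* S*` and `τ̄ + S* Σ*`, this gives
`Ker L̃₁* = Σ* (Ker L₁*)`, i.e. the diagonal vectors `(Φ, …, Φ)`. The range of a matrix is the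
orthogonal complement of the kernel of its adjoint, and `⟨Ψ, Σ* Φ⟩ = ⟨Σ Ψ, Φ⟩` turns this into the
stated condition on `Σ_j Ψ_j`.
-/

open Matrix

namespace Matrix

theorem dotProduct_star_conjTranspose_mulVec {m n R : Type*} [Fintype m] [Fintype n]
    [CommSemiring R] [StarRing R] (C : Matrix n m R) (x : m → R) (y : n → R) :
    x ⬝ᵥ star (Cᴴ *ᵥ y) = (C *ᵥ x) ⬝ᵥ star y := by
  rw [star_mulVec, conjTranspose_conjTranspose, dotProduct_comm, ← dotProduct_mulVec,
    dotProduct_comm]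

section SmulOneAddMul

variable {m n : Type*} [Fintype m] [Fintype n] [DecidableEq m] [DecidableEq n]

theorem smul_one_add_mul_mul_comm {R : Type*} [CommSemiring R] (τ : R) (B : Matrix m n R)
    (C : Matrix n m R) : (τ • 1 + B * C) * B = B * (τ • 1 + C * B) := by
  rw [Matrix.add_mul, Matrix.mul_add, Matrix.smul_mul, Matrix.mul_smul, Matrix.one_mul,
    Matrix.mul_one, Matrix.mul_assoc]

variable {K : Type*} [Field K]

theorem smul_one_add_mul_mulVec_eq_zero_iff {τ : K} (hτ : τ ≠ 0) (B : Matrix m n K)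
    (C : Matrix n m K) (x : m → K) :
    (τ • 1 + B * C) *ᵥ x = 0 ↔ ∃ y, (τ • 1 + C * B) *ᵥ y = 0 ∧ x = B *ᵥ y := by
  constructor
  · intro hx
    refine ⟨-τ⁻¹ • C *ᵥ x, ?_, ?_⟩
    · rw [mulVec_smul, mulVec_mulVec, smul_one_add_mul_mul_comm, ← mulVec_mulVec, hx,
        mulVec_zero, smul_zero]
    · have hBCx : B *ᵥ C *ᵥ x = -(τ • x) := by
        refine eq_neg_of_add_eq_zero_right ?_
        rwa [add_mulVec, smul_mulVec, one_mulVec, ← mulVec_mulVec] at hx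
      rw [mulVec_smul, hBCx, smul_neg, neg_smul, neg_neg, smul_smul, inv_mul_cancel₀ hτ,
        one_smul]
  · rintro ⟨y, hy, rfl⟩
    rw [mulVec_mulVec, smul_one_add_mul_mul_comm, ← mulVec_mulVec, hy, mulVec_zero]

theorem conjTranspose_smul_one_add_mul_mulVec_eq_zero_iff [StarRing K] {τ : K} (hτ : τ ≠ 0)
    (B : Matrix m n K) (C : Matrix n m K) (x : m → K) :
    (τ • 1 + B * C)ᴴ *ᵥ x = 0 ↔ ∃ y, (τ • 1 + C * B)ᴴ *ᵥ y = 0 ∧ x = Cᴴ *ᵥ y := by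
  simp only [conjTranspose_add, conjTranspose_smul, conjTranspose_one, conjTranspose_mul]
  exact smul_one_add_mul_mulVec_eq_zero_iff (star_ne_zero.mpr hτ) Cᴴ Bᴴ x

variable {𝕜 : Type*} [RCLike 𝕜]

theorem exists_mulVec_eq_iff_forall_dotProduct_star_eq_zero (M : Matrix m n 𝕜) (x : m → 𝕜) :
    (∃ z, M *ᵥ z = x) ↔ ∀ y, Mᴴ *ᵥ y = 0 → x ⬝ᵥ star y = 0 := by
  have hrange : (∃ z, M *ᵥ z = x) ↔ WithLp.toLp 2 x ∈ (toEuclideanLin M).range := by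
    simp only [LinearMap.mem_range, toLpLin_apply]
    constructor
    · rintro ⟨z, rfl⟩
      exact ⟨WithLp.toLp 2 z, rfl⟩
    · rintro ⟨z, hz⟩
      exact ⟨z.ofLp, congrArg WithLp.ofLp hz⟩
  rw [hrange, ← Submodule.orthogonal_orthogonal (toEuclideanLin M).range,
    LinearMap.orthogonal_range, ← toEuclideanLin_conjTranspose_eq_adjoint,
    Submodule.mem_orthogonal]
  simp only [LinearMap.mem_ker, toLpLin_apply, EuclideanSpace.inner_eq_star_dotProduct]
  exact (WithLp.equiv 2 (m → 𝕜)).forall_congr fun u => by simp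

theorem exists_smul_one_add_mul_mulVec_eq_iff {τ : 𝕜} (hτ : τ ≠ 0) (B : Matrix m n 𝕜)
    (C : Matrix n m 𝕜) (x : m → 𝕜) :
    (∃ z, (τ • 1 + B * C) *ᵥ z = x) ↔
      ∀ y, (τ • 1 + C * B)ᴴ *ᵥ y = 0 → (C *ᵥ x) ⬝ᵥ star y = 0 := by
  rw [exists_mulVec_eq_iff_forall_dotProduct_star_eq_zero]
  constructor
  · intro h y hy
    rw [← dotProduct_star_conjTranspose_mulVec]
    exact h _ ((conjTranspose_smul_one_add_mul_mulVec_eq_zero_iff hτ B C _).mpr ⟨y, hy, rfl⟩)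
  · intro h w hw
    obtain ⟨y, hy, rfl⟩ := (conjTranspose_smul_one_add_mul_mulVec_eq_zero_iff hτ B C w).mp hw
    rw [dotProduct_star_conjTranspose_mulVec]
    exact h y hy

end SmulOneAddMul

section Blocks

variable {ι n R : Type*} [Fintype n] [DecidableEq n]

def sumBlocks (ι n R : Type*) [DecidableEq n] [Zero R] [One R] : Matrix n (ι × n) R :=
  of fun a p => if p.2 = a then 1 else 0

def stackBlocks [Mul R] (ξ : ι → R) (A : ι → Matrix n n R) : Matrix (ι × n) n R :=
  of fun p b => ξ p.1 * A p.1 p.2 b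

variable [CommSemiring R]

theorem stackBlocks_mul_sumBlocks (ξ : ι → R) (A : ι → Matrix n n R) :
    stackBlocks ξ A * sumBlocks ι n R = of fun p q => ξ p.1 * A p.1 p.2 q.2 := by
  ext p q
  simp [stackBlocks, sumBlocks, mul_apply]

theorem conjTranspose_sumBlocks_mulVec [StarRing R] (y : n → R) :
    (sumBlocks ι n R)ᴴ *ᵥ y = fun p => y p.2 := by
  ext p
  simp [sumBlocks, mulVec, dotProduct, conjTranspose_apply, apply_ite star]

variable [Fintype ι]

theorem sumBlocks_mul_stackBlocks (ξ : ι → R) (A : ι → Matrix n n R) :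
    sumBlocks ι n R * stackBlocks ξ A = ∑ l, ξ l • A l := by
  ext a b
  simp [stackBlocks, sumBlocks, mul_apply, Fintype.sum_prod_type, sum_apply]

theorem sumBlocks_mulVec (x : ι × n → R) :
    sumBlocks ι n R *ᵥ x = fun a => ∑ j, x (j, a) := by
  ext a
  simp [sumBlocks, mulVec, dotProduct, Fintype.sum_prod_type]

end Blocks

end Matrix

theorem berenger_adjoint_kernel_and_range_general (N d : ℕ)
    (A : Fin d → Matrix (Fin N) (Fin N) ℂ)
    (τ : ℂ) (hτ : τ ≠ 0) (ξ : Fin d → ℂ)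
    (L1 : Matrix (Fin N) (Fin N) ℂ)
    (hL1 : L1 = τ • (1 : Matrix (Fin N) (Fin N) ℂ) + ∑ l, ξ l • A l)
    (tL1 : Matrix (Fin d × Fin N) (Fin d × Fin N) ℂ)
    (htL1 : tL1 = Matrix.of fun p q : Fin d × Fin N =>
        ξ p.1 * A p.1 p.2 q.2 + if p = q then τ else 0) :
    (∀ Ψ : Fin d × Fin N → ℂ,
        tL1ᴴ.mulVec Ψ = 0 ↔
          ∃ Φ : Fin N → ℂ, L1ᴴ.mulVec Φ = 0 ∧ ∀ j a, Ψ (j, a) = Φ a)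
    ∧ (∀ Ψ : Fin d × Fin N → ℂ,
        (∃ X, tL1.mulVec X = Ψ) ↔
          ∀ Φ : Fin N → ℂ, L1ᴴ.mulVec Φ = 0 →
            ∑ a, (∑ j, Ψ (j, a)) * star (Φ a) = 0) := by
  have hL1' : L1 = τ • 1 + sumBlocks (Fin d) (Fin N) ℂ * stackBlocks ξ A := by
    rw [hL1, sumBlocks_mul_stackBlocks]
  have htL1' : tL1 = τ • 1 + stackBlocks ξ A * sumBlocks (Fin d) (Fin N) ℂ := by
    rw [htL1, stackBlocks_mul_sumBlocks]
    ext p q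
    simp only [of_apply, Matrix.add_apply, Matrix.smul_apply, one_apply, smul_eq_mul, mul_ite,
      mul_one, mul_zero, add_comm]
  rw [hL1', htL1']
  refine ⟨fun Ψ => ?_, fun Ψ => ?_⟩
  · rw [conjTranspose_smul_one_add_mul_mulVec_eq_zero_iff hτ]
    simp only [conjTranspose_sumBlocks_mulVec, funext_iff, Prod.forall]
  · rw [exists_smul_one_add_mul_mulVec_eq_iff hτ, sumBlocks_mulVec]
    rfl

/-- Kernel of the adjoint of the Bérenger split symbol and range of the split symbol:
`Ker L̃₁(τ,ξ)* = {(Φ,…,Φ) : Φ ∈ Ker L₁(τ,ξ)*}` and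
`Range L̃₁(τ,ξ) = {(Ψ₁,…,Ψ_d) : ⟨ΣΨⱼ, Φ⟩ = 0 ∀ Φ ∈ Ker L₁(τ,ξ)*}`. -/
theorem berenger_adjoint_kernel_and_range (N d : ℕ)
    (A : Fin d → Matrix (Fin N) (Fin N) ℂ)
    (τ : ℂ) (hτ : τ ≠ 0) (ξ : Fin d → ℂ)
    (L1 : Matrix (Fin N) (Fin N) ℂ)
    (hL1 : L1 = τ • (1 : Matrix (Fin N) (Fin N) ℂ) + ∑ l, ξ l • A l)
    (hchar : L1.det = 0)
    (tL1 : Matrix (Fin d × Fin N) (Fin d × Fin N) ℂ)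
    (htL1 : tL1 = Matrix.of fun p q : Fin d × Fin N =>
        ξ p.1 * A p.1 p.2 q.2 + if p = q then τ else 0) :
    (∀ Ψ : Fin d × Fin N → ℂ,
        tL1ᴴ.mulVec Ψ = 0 ↔
          ∃ Φ : Fin N → ℂ, L1ᴴ.mulVec Φ = 0 ∧ ∀ j a, Ψ (j, a) = Φ a)
    ∧ (∀ Ψ : Fin d × Fin N → ℂ,
        (∃ X, tL1.mulVec X = Ψ) ↔
          ∀ Φ : Fin N → ℂ, L1ᴴ.mulVec Φ = 0 →
            ∑ a, (∑ j, Ψ (j, a)) * star (Φ a) = 0) :=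
  berenger_adjoint_kernel_and_range_general N d A τ hτ ξ L1 hL1 tL1 htL1
end

section
/- For the 1×1 example L = ∂_t + ∂_1 + ∂_2 with absorption σ = 1 in x_1, the split symbol L̃(τ,ξ,-ξ) = [[τ+ξ+1, ξ],[-ξ, τ-ξ]] has determinant τ² + τ - ξ, and for ξ → -∞ the roots τ = (-1 ± √(1+4ξ))/2 have imaginary parts unbounded. In particular, for every M ≥ 0 there exists ξ ∈ ℝ and τ ∈ ℂ with det L̃(τ,ξ,-ξ) = 0 and |Im τ| > M. -/
open Matrix

theorem det_split_symbol {R : Type*} [CommRing R] (τ ξ : R) :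
    (!![τ + ξ + 1, ξ; -ξ, τ - ξ]).det = τ ^ 2 + τ - ξ := by
  rw [det_fin_two_of]
  ring

/-- `τ² + τ - ξ = (τ + 1/2)² - (ξ + 1/4)`, so for `ξ < -1/4` the roots are `-1/2 ± i √(-ξ - 1/4)`. -/
theorem sq_add_self_neg_half_add_mul_I (s : ℝ) :
    ((-1 / 2 + s * Complex.I) ^ 2 + (-1 / 2 + s * Complex.I) : ℂ) = ((-(s ^ 2 + 1 / 4) : ℝ) : ℂ) := by
  push_cast
  linear_combination (s : ℂ) ^ 2 * Complex.I_sq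

theorem exists_root_sq_add_self_sub_im_eq (s : ℝ) :
    ∃ (ξ : ℝ) (τ : ℂ), τ ^ 2 + τ - ξ = 0 ∧ τ.im = s :=
  ⟨-(s ^ 2 + 1 / 4), -1 / 2 + s * Complex.I,
    by rw [sq_add_self_neg_half_add_mul_I, sub_self], by simp⟩

/-- For `L = ∂_t + ∂_1 + ∂_2` with absorption `σ = 1` in `x₁`, the split symbol
`L̃(τ,ξ,-ξ) = [[τ+ξ+1, ξ],[-ξ, τ-ξ]]` has determinant `τ² + τ - ξ`, and the
imaginary parts of its roots are unbounded over real `ξ`: for every `M ≥ 0`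
there are `ξ ∈ ℝ`, `τ ∈ ℂ` with `det L̃(τ,ξ,-ξ) = 0` and `|Im τ| > M`. -/
theorem berenger_not_weakly_hyperbolic_example :
    (∀ τ ξ : ℂ, (!![τ + ξ + 1, ξ; -ξ, τ - ξ]).det = τ ^ 2 + τ - ξ) ∧
    ∀ M : ℝ, 0 ≤ M → ∃ (ξ : ℝ) (τ : ℂ),
      (!![τ + (ξ : ℂ) + 1, (ξ : ℂ); -(ξ : ℂ), τ - (ξ : ℂ)]).det = 0 ∧
      M < |τ.im| := by
  refine ⟨det_split_symbol, fun M hM => ?_⟩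
  obtain ⟨ξ, τ, hroot, him⟩ := exists_root_sq_add_self_sub_im_eq (M + 1)
  refine ⟨ξ, τ, by rw [det_split_symbol, hroot], ?_⟩
  rw [him, abs_of_nonneg (by linarith)]
  linarith
end

section
/- Suppose L_1(0,ξ) = Σ_l ξ_l A_l has kernel of dimension m for every ξ ∈ ℝ^d \ {0}, and there exists ξ ≠ 0 with Ker L_1(0,ξ) ≠ ∩_{j : ξ_j ≠ 0} Ker A_j. Then the geometric multiplicity of the eigenvalue 0 of the split symbol L̃_1(0,ξ) is strictly smaller than its algebraic multiplicity N(d-1) + m; in particular L̃_1(0,ξ) is not diagonalizable. -/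
/-!
Write `B l = ξ_l A_l`. The split symbol factors as `S = C R`, where `C` stacks the blocks `B l`
and `R Φ = ∑_j Φ_j`. Since `R` is onto, `Ker S = R⁻¹(⋂ Ker B_l)` has dimension
`N(d-1) + dim ⋂ Ker B_l < N(d-1) + m`. Exchanging the factors gives
`χ_S = X^{N(d-1)} χ_{∑ B_l}`, so the algebraic multiplicity of `0` is at least `N(d-1) + m`,
whereas for a diagonalizable matrix the two multiplicities agree.
-/

open Matrix Polynomial Module

theorem Submodule.finrank_comap_add_finrank_of_surjective {K V W : Type*} [DivisionRing K]
    [AddCommGroup V] [Module K V] [AddCommGroup W] [Module K W]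
    [FiniteDimensional K V] [FiniteDimensional K W]
    {f : V →ₗ[K] W} (hf : Function.Surjective f) (p : Submodule K W) :
    finrank K (p.comap f) + finrank K W = finrank K V + finrank K p := by
  have hker : p.comap f = LinearMap.ker (p.mkQ ∘ₗ f) := by
    rw [LinearMap.ker_comp, Submodule.ker_mkQ]
  have hrange : LinearMap.range (p.mkQ ∘ₗ f) = ⊤ :=
    LinearMap.range_eq_top.mpr (p.mkQ_surjective.comp hf)
  have hrank := LinearMap.finrank_range_add_finrank_ker (p.mkQ ∘ₗ f)
  rw [hrange, finrank_top, ← hker] at hrank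
  have := p.finrank_quotient_add_finrank
  omega

namespace Matrix

section Diagonalizable

variable {K n : Type*} [Field K] [Fintype n] [DecidableEq n]

theorem finrank_ker_le_natTrailingDegree_charpoly (M : Matrix n n K) :
    finrank K (LinearMap.ker M.mulVecLin) ≤ M.charpoly.natTrailingDegree := by
  rw [← charpoly_mulVecLin, ← LinearMap.finrank_maxGenEigenspace_zero_eq,
    ← Module.End.eigenspace_zero]
  exact Submodule.finrank_mono Module.End.eigenspace_le_maxGenEigenspace

theorem maxGenEigenspace_zero_eq_ker_of_isDiag {P D : Matrix n n K} (hP : IsUnit P.det)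
    (hD : D.IsDiag) :
    Module.End.maxGenEigenspace (P * D * P⁻¹).mulVecLin 0 =
      LinearMap.ker (P * D * P⁻¹).mulVecLin := by
  obtain ⟨u, rfl⟩ := (isUnit_iff_isUnit_det P).mpr hP
  rw [← coe_units_inv, ← hD.diagonal_diag]
  refine le_antisymm (fun x hx => ?_) ?_
  · obtain ⟨k, hk⟩ := (Module.End.mem_maxGenEigenspace _ _ _).mp hx
    rw [zero_smul, sub_zero] at hk
    replace hk :
        ((u : Matrix n n K) * diagonal D.diag ^ k * (↑u⁻¹ : Matrix n n K)) *ᵥ x = 0 := by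
      rwa [← Units.conj_pow, ← toLin'_apply, toLin'_pow]
    -- `u⁻¹ *ᵥ x` is a generalized null vector of the diagonal matrix, hence a null vector.
    have hy : (↑u⁻¹ *ᵥ x) ∈ Module.End.maxGenEigenspace (diagonal D.diag).toLin' 0 := by
      refine (Module.End.mem_maxGenEigenspace _ _ _).mpr ⟨k, ?_⟩
      rw [zero_smul, sub_zero, ← toLin'_pow, toLin'_apply,
        ← mulVec_zero (↑u⁻¹ : Matrix n n K), ← hk, mulVec_mulVec, mulVec_mulVec,
        ← mul_assoc, ← mul_assoc, Units.inv_mul, one_mul]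
    rw [maxGenEigenspace_toLin'_diagonal_eq_eigenspace, Module.End.eigenspace_zero,
      LinearMap.mem_ker, toLin'_apply] at hy
    rw [LinearMap.mem_ker, mulVecLin_apply, ← mulVec_mulVec, ← mulVec_mulVec, hy, mulVec_zero]
  · rw [← Module.End.eigenspace_zero]
    exact Module.End.eigenspace_le_maxGenEigenspace

theorem finrank_ker_eq_natTrailingDegree_charpoly_of_isDiag {P D : Matrix n n K}
    (hP : IsUnit P.det) (hD : D.IsDiag) :
    finrank K (LinearMap.ker (P * D * P⁻¹).mulVecLin) =
      (P * D * P⁻¹).charpoly.natTrailingDegree := by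
  rw [← maxGenEigenspace_zero_eq_ker_of_isDiag hP hD, LinearMap.finrank_maxGenEigenspace_zero_eq,
    charpoly_mulVecLin]

end Diagonalizable

section SplitSymbol

variable {R ι n : Type*} [CommRing R] [Fintype n] [DecidableEq n]

/-- For `B l = ξ_l A_l` this is `L̃₁(0,ξ)`: its block row `l` is `B l` repeated `|ι|` times,
so `(splitSymbol B *ᵥ Φ) l = B l *ᵥ ∑ j, Φ j`. -/
def splitSymbol (B : ι → Matrix n n R) : Matrix (ι × n) (ι × n) R :=
  of fun p q => B p.1 p.2 q.2

def blockStack (B : ι → Matrix n n R) : Matrix (ι × n) n R :=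
  of fun p q => B p.1 p.2 q

def identityBlockRow (ι n R : Type*) [Zero R] [One R] [DecidableEq n] : Matrix n (ι × n) R :=
  of fun q p => (1 : Matrix n n R) q p.2

theorem blockStack_mul_identityBlockRow (B : ι → Matrix n n R) :
    blockStack B * identityBlockRow ι n R = splitSymbol B := by
  ext p q
  simp [blockStack, identityBlockRow, splitSymbol, mul_apply, one_apply]

theorem identityBlockRow_mul_blockStack [Fintype ι] (B : ι → Matrix n n R) :
    identityBlockRow ι n R * blockStack B = ∑ l, B l := by
  ext q r
  simp [blockStack, identityBlockRow, mul_apply, one_apply, Fintype.sum_prod_type, sum_apply]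

omit [DecidableEq n] in
theorem ker_mulVecLin_blockStack (B : ι → Matrix n n R) :
    LinearMap.ker (blockStack B).mulVecLin = ⨅ l, LinearMap.ker (B l).mulVecLin := by
  ext x
  simp [Submodule.mem_iInf, funext_iff, mulVec, blockStack, dotProduct, Prod.forall]

omit [DecidableEq n] in
theorem iInf_ker_mulVecLin_le_ker_sum [Fintype ι] (B : ι → Matrix n n R) :
    ⨅ l, LinearMap.ker (B l).mulVecLin ≤ LinearMap.ker (∑ l, B l).mulVecLin := by
  intro x hx
  simp only [Submodule.mem_iInf, LinearMap.mem_ker, mulVecLin_apply] at hx ⊢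
  simp [sum_mulVec, hx]

theorem identityBlockRow_mulVecLin_surjective [Fintype ι] [Nonempty ι] :
    Function.Surjective (identityBlockRow ι n R).mulVecLin := by
  classical
  intro y
  refine ⟨fun p => (Pi.single (Classical.arbitrary ι) y : ι → n → R) p.1 p.2, ?_⟩
  ext q
  simp [identityBlockRow, mulVec, dotProduct, one_apply, Fintype.sum_prod_type,
    Pi.single_apply, ite_apply]

theorem charpoly_splitSymbol [Fintype ι] [Nonempty ι] [DecidableEq ι] (B : ι → Matrix n n R) :
    (splitSymbol B).charpoly =
      X ^ (Fintype.card n * (Fintype.card ι - 1)) * (∑ l, B l).charpoly := by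
  have hcard : Fintype.card n ≤ Fintype.card (ι × n) := by
    rw [Fintype.card_prod]
    exact Nat.le_mul_of_pos_left _ Fintype.card_pos
  rw [← blockStack_mul_identityBlockRow, charpoly_mul_comm_of_le _ _ hcard,
    identityBlockRow_mul_blockStack, Fintype.card_prod, ← Nat.sub_one_mul, Nat.mul_comm (_ - 1)]

theorem finrank_ker_splitSymbol {K : Type*} [Field K] [Fintype ι] [Nonempty ι]
    (B : ι → Matrix n n K) :
    finrank K (LinearMap.ker (splitSymbol B).mulVecLin) =
      Fintype.card n * (Fintype.card ι - 1) +
        finrank K (⨅ l, LinearMap.ker (B l).mulVecLin : Submodule K (n → K)) := by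
  have hdim := Submodule.finrank_comap_add_finrank_of_surjective
    (identityBlockRow_mulVecLin_surjective (ι := ι) (n := n) (R := K))
    (⨅ l, LinearMap.ker (B l).mulVecLin)
  rw [← ker_mulVecLin_blockStack, ← LinearMap.ker_comp, ← mulVecLin_mul,
    blockStack_mul_identityBlockRow, finrank_pi, finrank_pi, Fintype.card_prod] at hdim
  have hcard : Fintype.card ι * Fintype.card n =
      Fintype.card n * (Fintype.card ι - 1) + Fintype.card n := by
    rw [mul_comm, ← Nat.mul_add_one, Nat.sub_add_cancel Fintype.card_pos]
  rw [← ker_mulVecLin_blockStack]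
  omega

end SplitSymbol

end Matrix

open Matrix

/-- If `dim Ker L₁(0,ξ) = m` for all real `ξ ≠ 0` and for some `ξ ≠ 0` one has
`Ker L₁(0,ξ) ≠ ∩ⱼ Ker(ξⱼAⱼ)`, then the geometric multiplicity of the eigenvalue
`0` of the split symbol `L̃₁(0,ξ)` is strictly less than its algebraic
multiplicity `N(d-1)+m`; in particular `L̃₁(0,ξ)` is not diagonalizable. -/
theorem berenger_not_diagonalizable (N d m : ℕ)
    (A : Fin d → Matrix (Fin N) (Fin N) ℂ)
    (hm : ∀ ξ : Fin d → ℝ, ξ ≠ 0 →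
      Module.finrank ℂ (LinearMap.ker (∑ l, (ξ l : ℂ) • A l).mulVecLin) = m)
    (ξ : Fin d → ℝ) (hξ : ξ ≠ 0)
    (hne : LinearMap.ker (∑ l, (ξ l : ℂ) • A l).mulVecLin ≠
      ⨅ j, LinearMap.ker ((ξ j : ℂ) • A j).mulVecLin) :
    Module.finrank ℂ (LinearMap.ker
        (Matrix.of fun p q : Fin d × Fin N =>
          (ξ p.1 : ℂ) * A p.1 p.2 q.2).mulVecLin) < N * (d - 1) + m
    ∧ ¬ ∃ (P D : Matrix (Fin d × Fin N) (Fin d × Fin N) ℂ),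
        IsUnit P.det ∧ D.IsDiag ∧
        (Matrix.of fun p q : Fin d × Fin N =>
          (ξ p.1 : ℂ) * A p.1 p.2 q.2) = P * D * P⁻¹ := by
  obtain ⟨l₀, -⟩ := Function.ne_iff.mp hξ
  have : Nonempty (Fin d) := ⟨l₀⟩
  set B : Fin d → Matrix (Fin N) (Fin N) ℂ := fun l => (ξ l : ℂ) • A l
  change finrank ℂ (LinearMap.ker (splitSymbol B).mulVecLin) < N * (d - 1) + m ∧
    ¬ ∃ P D, IsUnit P.det ∧ D.IsDiag ∧ splitSymbol B = P * D * P⁻¹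
  have hcommon :
      finrank ℂ (⨅ l, LinearMap.ker (B l).mulVecLin : Submodule ℂ (Fin N → ℂ)) < m := by
    rw [← hm ξ hξ]
    exact Submodule.finrank_lt_finrank_of_lt ((iInf_ker_mulVecLin_le_ker_sum B).lt_of_ne hne.symm)
  have hgeom : finrank ℂ (LinearMap.ker (splitSymbol B).mulVecLin) < N * (d - 1) + m := by
    rw [finrank_ker_splitSymbol]
    simpa using hcommon
  refine ⟨hgeom, fun ⟨P, D, hP, hD, hdiag⟩ => ?_⟩
  have halg : N * (d - 1) + m ≤ (splitSymbol B).charpoly.natTrailingDegree := by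
    rw [charpoly_splitSymbol, natTrailingDegree_mul (pow_ne_zero _ X_ne_zero)
      (charpoly_monic _).ne_zero, natTrailingDegree_X_pow, ← hm ξ hξ, Fintype.card_fin,
      Fintype.card_fin]
    exact Nat.add_le_add_left (finrank_ker_le_natTrailingDegree_charpoly _) _
  have hmult := finrank_ker_eq_natTrailingDegree_charpoly_of_isDiag hP hD
  rw [← hdiag] at hmult
  omega
end

section
/- Suppose Ker L_1(0,ξ) = ∩_{j} Ker(ξ_j A_j) for all ξ ∈ ℝ^d, 0 is a semi-simple eigenvalue of L_1(0,ξ), and L_1(0,ξ) = S(ξ)D(ξ)S(ξ)^{-1} with D real diagonal. Let Q(ξ) be the partial inverse of L_1(0,ξ) determined by Q Π_L = 0 and Q L_1(0,ξ) = I - Π_L. Then, writing the change of variables V^1 = Σ_j U^j, V^l = U^l (l ≥ 2), the matrix Q̃(ξ) with first block column (L_1(0,ξ), ξ_2 A_2, ..., ξ_d A_d) and zeros elsewhere is diagonalized by the block matrix S̃(ξ) with diagonal blocks (S(ξ), I, ..., I) and first-column off-diagonal blocks ξ_j A_j Q(ξ) S(ξ) (j ≥ 2): S̃(ξ)^{-1}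 Q̃(ξ) S̃(ξ) = diag(D(ξ), 0, ..., 0). -/
/-!
All matrices involved are block matrices with an arbitrary first block column, scalar
diagonal blocks elsewhere and zeros otherwise. Such matrices are closed under
multiplication by an explicit rule, so the three claimed identities reduce to identities
between `N × N` blocks: `S S⁻¹ = 1` for the inverse and, for the conjugation,
`S⁻¹ L₁ S = D` together with `ξⱼAⱼ Q L₁ = ξⱼAⱼ` (the hypothesis on `Q`), which kills the
off-diagonal blocks `(ξⱼAⱼ - ξⱼAⱼ Q L₁) S` of `S̃⁻¹ Q̃ S̃`.
-/

open Matrix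

namespace Matrix

variable {ι n α : Type*} [DecidableEq ι] [DecidableEq n]

def firstColBlock [Zero α] (i₀ : ι) (P : Matrix n n α) (C : ι → Matrix n n α) (c : α) :
    Matrix (ι × n) (ι × n) α :=
  of fun p q => if p.1 = i₀ then (if q.1 = i₀ then P p.2 q.2 else 0)
    else if q.1 = i₀ then C p.1 p.2 q.2 else if p = q then c else 0

section Zero

variable [Zero α] (i₀ : ι) (P : Matrix n n α)

theorem firstColBlock_congr_col {C C' : ι → Matrix n n α} (c : α) (h : ∀ j ≠ i₀, C j = C' j) :
    firstColBlock i₀ P C c = firstColBlock i₀ P C' c := by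
  ext ⟨i, a⟩ ⟨j, b⟩
  by_cases hi : i = i₀
  · simp [firstColBlock, hi]
  · simp [firstColBlock, hi, h i hi]

theorem firstColBlock_zero_eq (C : ι → Matrix n n α) :
    firstColBlock i₀ P C 0 = of fun p q =>
      if q.1 = i₀ then (if p.1 = i₀ then P p.2 q.2 else C p.1 p.2 q.2) else 0 := by
  ext p q
  by_cases hp : p.1 = i₀ <;> by_cases hq : q.1 = i₀ <;> simp [firstColBlock, hp, hq]

theorem firstColBlock_zero_zero_eq :
    firstColBlock i₀ P 0 0 = of fun p q => if p.1 = i₀ ∧ q.1 = i₀ then P p.2 q.2 else 0 := by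
  ext p q
  by_cases hp : p.1 = i₀ <;> by_cases hq : q.1 = i₀ <;> simp [firstColBlock, hp, hq]

theorem firstColBlock_one_zero_one [One α] : firstColBlock i₀ (1 : Matrix n n α) 0 1 = 1 := by
  ext ⟨i, a⟩ ⟨j, b⟩
  rcases eq_or_ne i i₀ with rfl | hi
  · rcases eq_or_ne j i with rfl | hj
    · simp [firstColBlock, one_apply]
    · simp [firstColBlock, hj, Ne.symm hj]
  · by_cases hj : j = i₀ <;> simp [firstColBlock, one_apply, hi, hj]

end Zero

variable [Fintype ι] [Fintype n] [Semiring α]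
  (i₀ : ι) (P P' : Matrix n n α) (C C' : ι → Matrix n n α) (c c' : α)

theorem firstColBlock_mul_apply_self (M : Matrix (ι × n) (ι × n) α) (a : n) (q : ι × n) :
    (firstColBlock i₀ P C c * M) (i₀, a) q = ∑ b, P a b * M (i₀, b) q := by
  simp [firstColBlock, mul_apply, Fintype.sum_prod_type, ite_mul]

theorem firstColBlock_mul_apply_of_ne (M : Matrix (ι × n) (ι × n) α) {i : ι} (hi : i ≠ i₀)
    (a : n) (q : ι × n) :
    (firstColBlock i₀ P C c * M) (i, a) q = ∑ b, C i a b * M (i₀, b) q + c * M (i, a) q := by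
  rw [mul_apply, Fintype.sum_prod_type, Fintype.sum_eq_add_sum_compl i₀,
    Finset.sum_eq_single_of_mem i (by simpa using hi)]
  · simp [firstColBlock, hi, ite_mul]
  · intro k hk hki
    have hk₀ : k ≠ i₀ := by simpa using hk
    simp [firstColBlock, hi, hk₀, Ne.symm hki]

theorem firstColBlock_mul :
    firstColBlock i₀ P C c * firstColBlock i₀ P' C' c' =
      firstColBlock i₀ (P * P') (fun j => C j * P' + c • C' j) (c * c') := by
  ext ⟨i, a⟩ ⟨j, b⟩
  rcases eq_or_ne i i₀ with rfl | hi
  · rw [firstColBlock_mul_apply_self]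
    by_cases hj : j = i
    · simp [firstColBlock, hj, mul_apply]
    · simp [firstColBlock, hj]
  · rw [firstColBlock_mul_apply_of_ne _ _ _ _ _ hi]
    by_cases hj : j = i₀
    · simp [firstColBlock, hi, hj, mul_apply]
    · by_cases ha : (i, a) = (j, b) <;> simp [firstColBlock, hi, hj, ha]

variable {P P' C C'} in
theorem firstColBlock_mul_eq_one (hP : P * P' = 1) (hC : ∀ j ≠ i₀, C j * P' + C' j = 0) :
    firstColBlock i₀ P C 1 * firstColBlock i₀ P' C' 1 = 1 := by
  rw [firstColBlock_mul, hP, one_mul, ← firstColBlock_one_zero_one i₀]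
  refine firstColBlock_congr_col i₀ 1 1 fun j hj => ?_
  rw [one_smul, hC j hj, Pi.zero_apply]

end Matrix

theorem berenger_block_diagonalization_general (N d : ℕ) [NeZero d]
    (A : Fin d → Matrix (Fin N) (Fin N) ℂ)
    (ξ : Fin d → ℝ)
    (L0 S Sinv D Q : Matrix (Fin N) (Fin N) ℂ)
    (hSS : S * Sinv = 1) (hSS' : Sinv * S = 1)
    (hdiag : L0 = S * D * Sinv)
    (hQ : ∀ j : Fin d, j ≠ 0 → (ξ j : ℂ) • (A j * (1 - Q * L0)) = 0)
    (Qt St Stinv : Matrix (Fin d × Fin N) (Fin d × Fin N) ℂ)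
    (hQt : Qt = Matrix.of fun p q : Fin d × Fin N =>
        if q.1 = 0 then
          (if p.1 = 0 then L0 p.2 q.2 else (ξ p.1 : ℂ) * A p.1 p.2 q.2)
        else 0)
    (hSt : St = Matrix.of fun p q : Fin d × Fin N =>
        if p.1 = 0 then (if q.1 = 0 then S p.2 q.2 else 0)
        else if q.1 = 0 then (ξ p.1 : ℂ) * (A p.1 * Q * S) p.2 q.2
        else if p = q then 1 else 0)
    (hStinv : Stinv = Matrix.of fun p q : Fin d × Fin N =>
        if p.1 = 0 then (if q.1 = 0 then Sinv p.2 q.2 else 0)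
        else if q.1 = 0 then -((ξ p.1 : ℂ) * (A p.1 * Q) p.2 q.2)
        else if p = q then 1 else 0) :
    St * Stinv = 1 ∧ Stinv * St = 1 ∧
    Stinv * Qt * St = Matrix.of fun p q : Fin d × Fin N =>
      if p.1 = 0 ∧ q.1 = 0 then D p.2 q.2 else 0 := by
  have hSt' : St = firstColBlock 0 S (fun j => (ξ j : ℂ) • (A j * Q * S)) 1 := hSt
  have hStinv' : Stinv = firstColBlock 0 Sinv (fun j => -((ξ j : ℂ) • (A j * Q))) 1 := hStinv
  have hQt' : Qt = firstColBlock 0 L0 (fun j => (ξ j : ℂ) • A j) 0 :=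
    hQt.trans (firstColBlock_zero_eq 0 L0 fun j => (ξ j : ℂ) • A j).symm
  have hSLS : Sinv * L0 * S = D := by
    rw [hdiag, ← Matrix.mul_assoc, ← Matrix.mul_assoc, hSS', Matrix.one_mul, Matrix.mul_assoc,
      hSS', Matrix.mul_one]
  have hAQL : ∀ j ≠ 0, (ξ j : ℂ) • (A j * Q) * L0 = (ξ j : ℂ) • A j := by
    intro j hj
    rw [Matrix.smul_mul, Matrix.mul_assoc, eq_comm, ← sub_eq_zero, ← smul_sub,
      ← Matrix.mul_one (A j), Matrix.mul_assoc, Matrix.one_mul, ← Matrix.mul_sub]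
    exact hQ j hj
  refine ⟨?_, ?_, ?_⟩
  · rw [hSt', hStinv']
    exact firstColBlock_mul_eq_one 0 hSS fun j _ => by simp [Matrix.mul_assoc, hSS]
  · rw [hSt', hStinv']
    exact firstColBlock_mul_eq_one 0 hSS' fun j _ => by simp [Matrix.mul_assoc]
  · rw [hStinv', hQt', hSt', firstColBlock_mul, firstColBlock_mul, hSLS, mul_zero, zero_mul,
      ← firstColBlock_zero_zero_eq]
    refine firstColBlock_congr_col 0 D 0 fun j hj => ?_
    rw [one_smul, zero_smul, add_zero, Matrix.neg_mul, hAQL j hj, neg_add_cancel,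
      Matrix.zero_mul, Pi.zero_apply]

/-- In the change of variables `V¹ = ΣUʲ`, `Vˡ = Uˡ (l ≥ 2)`, the block matrix
`Q̃(ξ)` (first block column `(L₁(0,ξ), ξ₂A₂, …, ξ_dA_d)`, zeros elsewhere) is
diagonalized by the block matrix `S̃(ξ)` with diagonal blocks `(S, I, …, I)` and
first-column off-diagonal blocks `ξⱼAⱼQ S`:
`S̃(ξ)⁻¹ Q̃(ξ) S̃(ξ) = diag(D(ξ), 0, …, 0)`. -/
theorem berenger_block_diagonalization (N d : ℕ) [NeZero d]
    (A : Fin d → Matrix (Fin N) (Fin N) ℂ)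
    (ξ : Fin d → ℝ)
    (L0 S Sinv D Q : Matrix (Fin N) (Fin N) ℂ)
    (hL0 : L0 = ∑ l, (ξ l : ℂ) • A l)
    (hSS : S * Sinv = 1) (hSS' : Sinv * S = 1)
    (hdiag : L0 = S * D * Sinv)
    (hD : D.IsDiag) (hDre : ∀ i, (D i i).im = 0)
    (hQ : ∀ j : Fin d, j ≠ 0 → (ξ j : ℂ) • (A j * (1 - Q * L0)) = 0)
    (Qt St Stinv : Matrix (Fin d × Fin N) (Fin d × Fin N) ℂ)
    (hQt : Qt = Matrix.of fun p q : Fin d × Fin N =>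
        if q.1 = 0 then
          (if p.1 = 0 then L0 p.2 q.2 else (ξ p.1 : ℂ) * A p.1 p.2 q.2)
        else 0)
    (hSt : St = Matrix.of fun p q : Fin d × Fin N =>
        if p.1 = 0 then (if q.1 = 0 then S p.2 q.2 else 0)
        else if q.1 = 0 then (ξ p.1 : ℂ) * (A p.1 * Q * S) p.2 q.2
        else if p = q then 1 else 0)
    (hStinv : Stinv = Matrix.of fun p q : Fin d × Fin N =>
        if p.1 = 0 then (if q.1 = 0 then Sinv p.2 q.2 else 0)
        else if q.1 = 0 then -((ξ p.1 : ℂ) * (A p.1 * Q) p.2 q.2)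
        else if p = q then 1 else 0) :
    St * Stinv = 1 ∧ Stinv * St = 1 ∧
    Stinv * Qt * St = Matrix.of fun p q : Fin d × Fin N =>
      if p.1 = 0 ∧ q.1 = 0 then D p.2 q.2 else 0 :=
  berenger_block_diagonalization_general N d A ξ L0 S Sinv D Q hSS hSS' hdiag hQ Qt St Stinv hQt hSt
    hStinv
end

section
/- Let S_1, S_2, S_3 be nonzero complex numbers and A_1, A_2, A_3 the Maxwell matrices (A_j e_j = 0, A_j e_{j+1} = -i e_{j+2}, A_j e_{j+2} = i e_{j+1}, indices mod 3). If M, N are invertible 3×3 complex matrices satisfying S_j^{-1} N A_j = A_j M for j = 1,2,3, then there exists γ ∈ ℂ \ {0} with M = γ·diag(S_1, S_2, S_3) and N = γ·diag(S_2S_3, S_1S_3, S_1S_2). Conversely these M, N satisfy the relations. -/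
/-!
Read entrywise, `N Aⱼ = Sⱼ Aⱼ M` makes the off-diagonal entries of row `j` of `N` and of column
`j` of `M` vanish, and gives `N_{j+1,j+1} = Sⱼ M_{j+2,j+2}` and `N_{j+2,j+2} = Sⱼ M_{j+1,j+1}`
(indices mod 3). So `M` and `N` are diagonal, and comparing the two expressions for each diagonal
entry of `N` shows that `M_{jj} / Sⱼ` is a constant `γ`, nonzero because `det M ≠ 0`.
-/

open Matrix

/-- The 3×3 Maxwell matrices. -/
def maxA : Fin 3 → Matrix (Fin 3) (Fin 3) ℂ :=
  ![!![0, 0, 0; 0, 0, -Complex.I; 0, Complex.I, 0],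
    !![0, 0, Complex.I; 0, 0, 0; -Complex.I, 0, 0],
    !![0, -Complex.I, 0; Complex.I, 0, 0; 0, 0, 0]]

lemma fin_three_add_one_add_one (j : Fin 3) : j + 1 + 1 = j + 2 := by fin_cases j <;> rfl

lemma fin_three_add_one_add_two (j : Fin 3) : j + 1 + 2 = j := by fin_cases j <;> rfl

lemma Matrix.isDiag_of_fin_three {α : Type*} [Zero α] {A : Matrix (Fin 3) (Fin 3) α}
    (h₁ : ∀ j, A (j + 1) j = 0) (h₂ : ∀ j, A (j + 2) j = 0) : A.IsDiag := by
  intro k l hkl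
  obtain rfl | rfl : k = l + 1 ∨ k = l + 2 := by revert k l; decide
  exacts [h₁ l, h₂ l]

lemma eq_smul_of_cyclic {S m n : Fin 3 → ℂ} (hS : ∀ j, S j ≠ 0)
    (h₁ : ∀ j, n (j + 1) = S j * m (j + 2)) (h₂ : ∀ j, n (j + 2) = S j * m (j + 1)) :
    m = (m 0 / S 0) • S ∧ n = (m 0 / S 0) • fun j => S (j + 1) * S (j + 2) := by
  have step j : m (j + 1) / S (j + 1) = m j / S j := by
    have h := h₁ (j + 1)
    rw [fin_three_add_one_add_one, fin_three_add_one_add_two, h₂] at h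
    field_simp [hS]
    linear_combination h
  have ratio j : m j / S j = m 0 / S 0 := by
    fin_cases j
    exacts [rfl, step 0, (step 1).trans (step 0)]
  have hm j : m j = m 0 / S 0 * S j := by rw [← ratio j, div_mul_cancel₀ _ (hS j)]
  refine ⟨funext hm, funext fun k => ?_⟩
  have h := h₂ (k + 1)
  rw [fin_three_add_one_add_two, fin_three_add_one_add_one, hm] at h
  rw [h, Pi.smul_apply, smul_eq_mul]
  ring

lemma entries_of_mul_maxA_eq_smul {M N : Matrix (Fin 3) (Fin 3) ℂ} {c : ℂ} {j : Fin 3}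
    (hc : c ≠ 0) (h : N * maxA j = c • (maxA j * M)) :
    N j (j + 1) = 0 ∧ N j (j + 2) = 0 ∧ M (j + 1) j = 0 ∧ M (j + 2) j = 0 ∧
      N (j + 1) (j + 1) = c * M (j + 2) (j + 2) ∧ N (j + 2) (j + 2) = c * M (j + 1) (j + 1) := by
  rw [← Matrix.ext_iff] at h
  fin_cases j <;>
  · simp [Fin.forall_fin_succ, maxA, mul_apply, Fin.sum_univ_three, vecMul, dotProduct] at h ⊢
    grind [Complex.I_ne_zero]

lemma inv_smul_diagonal_mul_maxA {S : Fin 3 → ℂ} (hS : ∀ j, S j ≠ 0) (j : Fin 3) :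
    (S j)⁻¹ • (diagonal (fun j => S (j + 1) * S (j + 2)) * maxA j) = maxA j * diagonal S := by
  ext k l
  fin_cases j <;> fin_cases k <;> fin_cases l <;>
    simp [maxA, diagonal_mul, mul_diagonal] <;> field_simp [hS]

/-- If invertible `M, N` satisfy `Sⱼ⁻¹ N Aⱼ = Aⱼ M` for the three Maxwell
matrices, then `M = γ diag(S₁,S₂,S₃)` and `N = γ diag(S₂S₃, S₁S₃, S₁S₂)` for
some nonzero scalar `γ`; conversely these matrices satisfy the relation. -/
theorem maxwell_stretching_matrices (S : Fin 3 → ℂ) (hS : ∀ j, S j ≠ 0) :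
    (∀ M N : Matrix (Fin 3) (Fin 3) ℂ, IsUnit M.det → IsUnit N.det →
      (∀ j, (S j)⁻¹ • (N * maxA j) = maxA j * M) →
      ∃ γ : ℂ, γ ≠ 0 ∧ M = γ • Matrix.diagonal S ∧
        N = γ • Matrix.diagonal (fun j => S (j + 1) * S (j + 2))) ∧
    (∀ γ : ℂ, γ ≠ 0 → ∀ j,
      (S j)⁻¹ • ((γ • Matrix.diagonal (fun j => S (j + 1) * S (j + 2))) * maxA j)
        = maxA j * (γ • Matrix.diagonal S)) := by
  refine ⟨fun M N hM _ h => ?_, fun γ _ j => ?_⟩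
  · have rel j : N * maxA j = S j • (maxA j * M) := by
      rw [← h j, smul_smul, mul_inv_cancel₀ (hS j), one_smul]
    choose hN₁ hN₂ hM₁ hM₂ hd₁ hd₂ using fun j => entries_of_mul_maxA_eq_smul (hS j) (rel j)
    have hMd : M.IsDiag := isDiag_of_fin_three hM₁ hM₂
    have hNd : N.IsDiag := isDiag_transpose_iff.mp (isDiag_of_fin_three hN₁ hN₂)
    obtain ⟨hm, hn⟩ := eq_smul_of_cyclic (m := M.diag) (n := N.diag) hS hd₁ hd₂
    have hM₀ : M.diag 0 ≠ 0 := by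
      rw [← hMd.diagonal_diag, det_diagonal] at hM
      exact Finset.prod_ne_zero_iff.mp hM.ne_zero 0 (Finset.mem_univ 0)
    refine ⟨M.diag 0 / S 0, div_ne_zero hM₀ (hS 0), ?_, ?_⟩
    · rw [← diagonal_smul, ← hm, hMd.diagonal_diag]
    · rw [← diagonal_smul, ← hn, hNd.diagonal_diag]
  · rw [smul_mul_assoc, mul_smul_comm, smul_comm, inv_smul_diagonal_mul_maxA hS]
end

section
/- Let L(τ,ρ,iη) = τI + ρA_1 + iΣ_{j≥2} η_j A_j with all A_j Hermitian (symmetric hyperbolic). Suppose the degree in ρ of det L(τ,ρ,iη) equals rank A_1 for all Re τ > τ_1 and η ∈ ℝ^{d-1}. Then for Re τ sufficiently large and η = 0, the number of roots ρ of det L(τ,ρ,0) = 0 with positive real part equals the number of negative eigenvalues of A_1 (counted with multiplicity), since ρ_j/τ ~ -1/λ_j as τ → +∞ where λ_j are the nonzero eigenvalues of A_1. -/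
/-! At `η = 0` the unitary diagonalising `A₁` turns `det (τ + ρ A₁)` into `∏ⱼ (τ + ρ λⱼ)`, so the
roots in `ρ` are exactly `-τ / λⱼ` for the nonzero eigenvalues `λⱼ`, and for `Re τ > 0` such a root
has positive real part iff `λⱼ < 0`. -/

open Matrix Polynomial

namespace Matrix

variable {n R S : Type*} [Fintype n] [DecidableEq n] [CommRing R] [CommRing S]

theorem det_smul_one_add_smul_map_of_eq_conj_diagonal (f : R →+* S) {A U U' : Matrix n n R}
    {d : n → R} (hUU' : U * U' = 1) (hU'U : U' * U = 1) (hA : A = U * diagonal d * U')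
    (p q : S) :
    det (p • 1 + q • A.map f) = ∏ i, (p + q * f (d i)) := by
  set F : Matrix n n R →+* Matrix n n S := f.mapMatrix
  have hconj : p • 1 + q • A.map f = F U * diagonal (fun i => p + q * f (d i)) * F U' := by
    have hdiag : diagonal (fun i => p + q * f (d i)) = p • 1 + q • F (diagonal d) := by
      ext i j
      rcases eq_or_ne i j with rfl | hij <;> simp [F, *]
    rw [hdiag, Matrix.mul_add, Matrix.add_mul, Matrix.mul_smul, Matrix.smul_mul, Matrix.mul_one,
      Matrix.mul_smul, Matrix.smul_mul, ← map_mul, ← map_mul, ← map_mul, hUU', map_one, ← hA]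
    rfl
  rw [hconj, det_conj_of_mul_eq_one (by rw [← map_mul, hUU', map_one])
    (by rw [← map_mul, hU'U, map_one]), det_diagonal]

theorem IsHermitian.det_smul_one_add_smul_map_C {A : Matrix n n ℂ} (hA : A.IsHermitian)
    (p q : ℂ[X]) :
    det (p • 1 + q • A.map C) = ∏ i, (p + q * C (hA.eigenvalues i : ℂ)) :=
  det_smul_one_add_smul_map_of_eq_conj_diagonal C
    (Unitary.mul_star_self_of_mem hA.eigenvectorUnitary.2)
    (Unitary.star_mul_self_of_mem hA.eigenvectorUnitary.2) hA.spectral_theorem p q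

end Matrix

namespace Polynomial

theorem roots_C_add_X_mul_C {K : Type*} [Field K] [DecidableEq K] (τ c : K) :
    (C τ + X * C c).roots = if c = 0 then 0 else ({-τ / c} : Multiset K) := by
  split_ifs with hc
  · simp [hc]
  · have hfactor : C τ + X * C c = C c * (X - C (-τ / c)) := by
      rw [mul_sub, ← C_mul, mul_div_cancel₀ _ hc, C_neg]
      ring
    rw [hfactor, roots_C_mul _ hc, roots_X_sub_C]

theorem roots_prod_C_add_X_mul_C {ι K : Type*} [Field K] [DecidableEq K] (s : Finset ι)
    {τ : K} (hτ : τ ≠ 0) (c : ι → K) :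
    (∏ i ∈ s, (C τ + X * C (c i))).roots = (s.val.filter (c · ≠ 0)).map (fun i => -τ / c i) := by
  have hfactor_ne : ∀ i ∈ s, C τ + X * C (c i) ≠ 0 := fun i _ h => hτ <| by
    simpa using congrArg (coeff · 0) h
  rw [roots_prod _ _ (Finset.prod_ne_zero_iff.mpr hfactor_ne), ← Multiset.bind_singleton,
    Multiset.bind_filter]
  refine Multiset.bind_congr fun i _ => ?_
  rw [roots_C_add_X_mul_C]
  split_ifs <;> simp_all

end Polynomial

theorem Complex.re_neg_div_ofReal_pos_iff {τ : ℂ} (hτ : 0 < τ.re) (r : ℝ) :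
    0 < (-τ / r).re ↔ r < 0 := by
  rw [neg_div, neg_re, div_ofReal_re, neg_pos, div_neg_iff]
  simp [hτ, hτ.not_gt]

theorem roots_positive_real_part_count_general (n d : ℕ) [NeZero d]
    (A : Fin d → Matrix (Fin n) (Fin n) ℂ)
    (hherm : ∀ j, (A j).IsHermitian)
    (Pfull : ℂ → (Fin d → ℝ) → Polynomial ℂ)
    (hPfull : ∀ τ η, Pfull τ η = Matrix.det (Matrix.of fun a b : Fin n =>
        Polynomial.C (τ * (if a = b then 1 else 0)
          + Complex.I * ∑ j ∈ Finset.univ.erase (0 : Fin d), (η j : ℂ) * A j a b)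
        + Polynomial.X * Polynomial.C (A 0 a b))) :
    ∃ T : ℝ, ∀ τ : ℂ, T < τ.re →
      Multiset.card ((Pfull τ 0).roots.filter fun ρ => 0 < ρ.re)
        = Multiset.card ((A 0).charpoly.roots.filter fun z => z.re < 0) := by
  have hA := hherm 0
  refine ⟨0, fun τ hτ => ?_⟩
  have hτ_ne : τ ≠ 0 := by rintro rfl; simp at hτ
  have hP : Pfull τ 0 = det (C τ • (1 : Matrix _ _ ℂ[X]) + (X : ℂ[X]) • (A 0).map C) := by
    rw [hPfull]
    congr 2 with a b : 1
    rcases eq_or_ne a b with rfl | hab <;> simp [one_apply, *]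
  rw [hP, hA.det_smul_one_add_smul_map_C, roots_prod_C_add_X_mul_C _ hτ_ne,
    hA.roots_charpoly_eq_eigenvalues, Multiset.filter_map, Multiset.filter_map,
    Multiset.card_map, Multiset.card_map, Multiset.filter_filter]
  congr 1
  refine Multiset.filter_congr fun i _ => ?_
  simp only [Function.comp_apply, Complex.re_neg_div_ofReal_pos_iff hτ]
  simpa using fun h : hA.eigenvalues i < 0 => h.ne

/-- For a symmetric hyperbolic system nondegenerate with respect to `x₁`, for
`Re τ` sufficiently large and `η = 0`, the number of roots `ρ` of
`det L(τ,ρ,0) = 0` with positive real part equals the number of negative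
eigenvalues of `A₁`, counted with multiplicity. -/
theorem roots_positive_real_part_count (n d : ℕ) [NeZero d]
    (A : Fin d → Matrix (Fin n) (Fin n) ℂ)
    (hherm : ∀ j, (A j).IsHermitian) (τ₁ : ℝ)
    (Pfull : ℂ → (Fin d → ℝ) → Polynomial ℂ)
    (hPfull : ∀ τ η, Pfull τ η = Matrix.det (Matrix.of fun a b : Fin n =>
        Polynomial.C (τ * (if a = b then 1 else 0)
          + Complex.I * ∑ j ∈ Finset.univ.erase (0 : Fin d), (η j : ℂ) * A j a b)
        + Polynomial.X * Polynomial.C (A 0 a b)))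
    (hdeg : ∀ (τ : ℂ) (η : Fin d → ℝ), τ₁ < τ.re →
      (Pfull τ η).natDegree = (A 0).rank) :
    ∃ T : ℝ, ∀ τ : ℂ, T < τ.re →
      Multiset.card ((Pfull τ 0).roots.filter fun ρ => 0 < ρ.re)
        = Multiset.card ((A 0).charpoly.roots.filter fun z => z.re < 0) :=
  roots_positive_real_part_count_general n d A hherm Pfull hPfull
end

section
/- Fix σ ∈ ℂ, τ ∈ ℂ with τ ≠ 0 and τ + σ ≠ 0, and η ∈ ℂ^{d-1}, and let L(τ,μ,iη) = τI + μA_1 + iΣ_{j≥2}η_j A_j. Let L̃ be the Bérenger split symbol with absorption σ in the x_1 direction, so that det L̃(τ,ν,iη) = ((τ+σ)/τ)^N det L(τ, τν/(τ+σ), iη) up to a nonzero factor. Then μ is a root of det L(τ,μ,iη) = 0 if and only if ν = (τ+σ)μ/τ is a root of det L̃(τ,ν,iη) = 0; equivalently, det L̃(τ,ν,iη) = 0 ⟺ det L(τ, τν/(τ+σ), iη) = 0. -/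
open Matrix

/-- Root correspondence for the Bérenger split symbol with one absorption `σ`
in direction `x₁`: `μ` is a root of `det L(τ,μ,iη) = 0` iff `ν = (τ+σ)μ/τ` is a
root of `det L̃(τ,ν,iη) = 0`. -/
theorem berenger_root_correspondence (n d : ℕ) [NeZero d]
    (A : Fin d → Matrix (Fin n) (Fin n) ℂ)
    (σ τ : ℂ) (hτ : τ ≠ 0) (hτσ : τ + σ ≠ 0) (η : Fin d → ℂ) (μ : ℂ) :
    Matrix.det (τ • (1 : Matrix (Fin n) (Fin n) ℂ) + μ • A 0
        + ∑ j ∈ Finset.univ.erase (0 : Fin d), (Complex.I * η j) • A j) = 0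
    ↔ Matrix.det (Matrix.of fun p q : Fin d × Fin n =>
        (if p.1 = 0 then ((τ + σ) * μ / τ) * A 0 p.2 q.2
          else Complex.I * η p.1 * A p.1 p.2 q.2)
        + if p = q then (if p.1 = 0 then τ + σ else τ) else 0) = 0 := by
  set L : Matrix (Fin n) (Fin n) ℂ :=
    τ • (1 : Matrix (Fin n) (Fin n) ℂ) + μ • A 0
        + ∑ j ∈ Finset.univ.erase (0 : Fin d), (Complex.I * η j) • A j with hL
  set f : Fin d × Fin n → ℂ := fun p => if p.1 = 0 then τ + σ else τ with hf
  have hfne : ∀ p, f p ≠ 0 := by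
    intro p; simp only [hf]; split <;> assumption
  set D : Matrix (Fin d × Fin n) (Fin d × Fin n) ℂ := Matrix.diagonal f with hD
  set D' : Matrix (Fin d × Fin n) (Fin d × Fin n) ℂ :=
    Matrix.diagonal (fun p => (f p)⁻¹) with hD'
  set G : Matrix (Fin d × Fin n) (Fin n) ℂ :=
    Matrix.of (fun p r => if p.1 = 0 then ((τ + σ) * μ / τ) * A 0 p.2 r
      else Complex.I * η p.1 * A p.1 p.2 r) with hG
  set H : Matrix (Fin n) (Fin d × Fin n) ℂ :=
    Matrix.of (fun r q => if r = q.2 then (1:ℂ) else 0) with hH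
  have hM : (Matrix.of fun p q : Fin d × Fin n =>
        (if p.1 = 0 then ((τ + σ) * μ / τ) * A 0 p.2 q.2
          else Complex.I * η p.1 * A p.1 p.2 q.2)
        + if p = q then (if p.1 = 0 then τ + σ else τ) else 0)
      = D + G * H := by
    ext p q
    have hsum : (G * H) p q = G p q.2 := by
      simp only [Matrix.mul_apply, hH, Matrix.of_apply, mul_ite, mul_one, mul_zero]
      rw [Finset.sum_ite_eq']
      simp
    simp only [Matrix.add_apply, hsum]
    simp only [Matrix.of_apply, Matrix.add_apply, hsum, hD, Matrix.diagonal_apply, hG,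
      Matrix.of_apply, hf]
    ring
  have hDD' : D * D' = 1 := by
    rw [hD, hD', Matrix.diagonal_mul_diagonal]
    have : (fun i => f i * (f i)⁻¹) = fun _ => (1:ℂ) := funext fun p => mul_inv_cancel₀ (hfne p)
    rw [this, Matrix.diagonal_one]
  have hfact : D + G * H = D * (1 + (D' * G) * H) := by
    rw [mul_add, mul_one, ← Matrix.mul_assoc, ← Matrix.mul_assoc, hDD', Matrix.one_mul]
  have hK : (1 : Matrix (Fin n) (Fin n) ℂ) + H * (D' * G) = τ⁻¹ • L := by
    ext r s
    have hDG : ∀ q : Fin d × Fin n, (D' * G) q s = (f q)⁻¹ * G q s := by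
      intro q; rw [hD', Matrix.diagonal_mul]
    have hHDg : (H * (D' * G)) r s = ∑ k : Fin d, (f (k, r))⁻¹ * G (k, r) s := by
      simp only [Matrix.mul_apply, hDG, hH, Matrix.of_apply, ite_mul, one_mul, zero_mul]
      rw [Fintype.sum_prod_type]
      congr 1
      funext k
      rw [Finset.sum_ite_eq]
      simp
    have hterm : ∀ k ∈ Finset.univ.erase (0 : Fin d),
        (f (k, r))⁻¹ * G (k, r) s = τ⁻¹ * (Complex.I * η k * A k r s) := by
      intro k hk
      have hk0 : k ≠ 0 := Finset.ne_of_mem_erase hk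
      simp [hf, hG, hk0]
    have h0 : (f ((0 : Fin d), r))⁻¹ * G ((0 : Fin d), r) s = τ⁻¹ * (μ * A 0 r s) := by
      simp only [hf, hG, Matrix.of_apply, if_pos rfl]
      field_simp
      rw [if_pos trivial]
      field_simp
    simp only [Matrix.add_apply, Matrix.one_apply, Matrix.smul_apply, smul_eq_mul]
    rw [hHDg, ← Finset.add_sum_erase Finset.univ _ (Finset.mem_univ (0 : Fin d)),
      Finset.sum_congr rfl hterm, h0]
    simp only [hL, Matrix.add_apply, Matrix.smul_apply, Matrix.one_apply,
      Matrix.sum_apply, smul_eq_mul]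
    rw [mul_add, mul_add, Finset.mul_sum, ← mul_assoc τ⁻¹ τ, inv_mul_cancel₀ hτ, one_mul]
    ring
  have hdetD : Matrix.det D ≠ 0 := by
    rw [hD, Matrix.det_diagonal]
    exact Finset.prod_ne_zero_iff.mpr fun p _ => hfne p
  rw [hM, hfact, Matrix.det_mul, Matrix.det_one_add_mul_comm, hK, Matrix.det_smul]
  rw [mul_eq_zero, mul_eq_zero]
  simp [hdetD, pow_eq_zero_iff, hτ]
end

section
/- Let Û = (Û_1,...,Û_d) : ℝ → (ℂ^N)^d solve the Bérenger split ODE system: A_1 (d/dx)(ΣÛ_j) + (τ+σ)Û_1 = 0 and τÛ_j + iη_j A_j ΣÛ_k = 0 for j = 2,...,d, with σ, τ constants, τ ≠ 0. Then Ŵ := Σ_j Û_j satisfies A_1 dŴ/dx + ((τ+σ)/τ) L(τ,0,iη) Ŵ = 0, where L(τ,0,iη) = τI + iΣ_{j≥2}η_j A_j. Conversely, if Ŵ solves this scalar-prefactor ODE and one defines Û_j := -(iη_j/τ)A_j Ŵ for j ≥ 2 and Û_1 := Ŵ - Σ_{j≥2} Û_j, then Û solves the split system. -/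
/-!
Writing `W = ∑ⱼ Uⱼ`, the transverse equations say `c j • Aⱼ W = -τ Uⱼ` for `j ≠ 0`, so
`L W = τ W + ∑_{j ≠ 0} c j • Aⱼ W = τ (W - ∑_{j ≠ 0} Uⱼ) = τ U₀`, and the first split equation
`A₀ W' + (τ + σ) U₀ = 0` becomes `A₀ W' + ((τ + σ)/τ) L W = 0`. Conversely the reconstructed `Uⱼ`
satisfy the transverse equations and sum to `W` by construction, so the same identity applies.
-/

open Matrix Finset

variable {K m ι : Type*} [Field K] [Fintype m] [Fintype ι] [DecidableEq ι]

section

variable [DecidableEq m]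

/-- The paper's `L(τ, 0, c)`, with `i₀` the normal direction. -/
def tangentialSymbol (τ : K) (c : ι → K) (A : ι → Matrix m m K) (i₀ : ι) : Matrix m m K :=
  τ • 1 + ∑ j ∈ univ.erase i₀, c j • A j

theorem tangentialSymbol_mulVec (τ : K) (c : ι → K) (A : ι → Matrix m m K) (i₀ : ι)
    (w : m → K) :
    tangentialSymbol τ c A i₀ *ᵥ w = τ • w + ∑ j ∈ univ.erase i₀, c j • A j *ᵥ w := by
  simp only [tangentialSymbol, add_mulVec, sum_mulVec, smul_mulVec, one_mulVec]

theorem tangentialSymbol_mulVec_sum {τ : K} {c : ι → K} {A : ι → Matrix m m K} {i₀ : ι}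
    {u : ι → m → K} (hsplit : ∀ j, j ≠ i₀ → τ • u j + c j • A j *ᵥ ∑ k, u k = 0) :
    tangentialSymbol τ c A i₀ *ᵥ ∑ k, u k = τ • u i₀ := by
  have hcoef : ∀ j ∈ univ.erase i₀, c j • A j *ᵥ ∑ k, u k = -(τ • u j) := fun j hj =>
    eq_neg_of_add_eq_zero_right (hsplit j (ne_of_mem_erase hj))
  rw [tangentialSymbol_mulVec, sum_congr rfl hcoef, sum_neg_distrib, ← smul_sum,
    ← add_sum_erase _ _ (mem_univ i₀), smul_add, add_neg_cancel_right]

theorem div_smul_tangentialSymbol_mulVec_sum {τ : K} (hτ : τ ≠ 0) (s : K) {c : ι → K}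
    {A : ι → Matrix m m K} {i₀ : ι} {u : ι → m → K}
    (hsplit : ∀ j, j ≠ i₀ → τ • u j + c j • A j *ᵥ ∑ k, u k = 0) :
    (s / τ) • tangentialSymbol τ c A i₀ *ᵥ ∑ k, u k = s • u i₀ := by
  rw [tangentialSymbol_mulVec_sum hsplit, smul_smul, div_mul_cancel₀ _ hτ]

end

def splitOfSum (τ : K) (c : ι → K) (A : ι → Matrix m m K) (i₀ : ι) (w : m → K) :
    ι → m → K :=
  fun j => if j = i₀ then w + ∑ k ∈ univ.erase i₀, (c k / τ) • A k *ᵥ w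
    else (-(c j / τ)) • A j *ᵥ w

theorem sum_splitOfSum (τ : K) (c : ι → K) (A : ι → Matrix m m K) (i₀ : ι) (w : m → K) :
    ∑ j, splitOfSum τ c A i₀ w j = w := by
  have hoff : ∀ j ∈ univ.erase i₀,
      splitOfSum τ c A i₀ w j = -((c j / τ) • A j *ᵥ w) := fun j hj => by
    rw [splitOfSum, if_neg (ne_of_mem_erase hj), neg_smul]
  rw [← add_sum_erase _ _ (mem_univ i₀), sum_congr rfl hoff, sum_neg_distrib, splitOfSum,
    if_pos rfl, add_neg_cancel_right]

theorem splitOfSum_split {τ : K} (hτ : τ ≠ 0) (c : ι → K) (A : ι → Matrix m m K) {i₀ : ι}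
    (w : m → K) {j : ι} (hj : j ≠ i₀) :
    τ • splitOfSum τ c A i₀ w j + c j • A j *ᵥ ∑ k, splitOfSum τ c A i₀ w k = 0 := by
  rw [sum_splitOfSum, splitOfSum, if_neg hj, smul_smul, ← add_smul, mul_neg,
    mul_div_cancel₀ _ hτ, neg_add_cancel, zero_smul]

/-- Equivalence between the Bérenger split ODE system and the scalar-prefactor
ODE for `Ŵ = Σ Ûⱼ`: `A₁Ŵ' + ((τ+σ)/τ) L(τ,0,iη) Ŵ = 0`, together with the
converse reconstruction of `Û` from `Ŵ`. -/
theorem berenger_split_ode_equivalence (n d : ℕ) [NeZero d]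
    (A : Fin d → Matrix (Fin n) (Fin n) ℂ)
    (σ τ : ℂ) (hτ : τ ≠ 0) (η : Fin d → ℂ) :
    (∀ U : ℝ → Fin d → Fin n → ℂ,
      Differentiable ℝ (fun x => ∑ j, U x j) →
      (∀ x, (A 0).mulVec (deriv (fun y => ∑ j, U y j) x) + (τ + σ) • U x 0 = 0) →
      (∀ j : Fin d, j ≠ 0 → ∀ x,
        τ • U x j + (Complex.I * η j) • (A j).mulVec (∑ k, U x k) = 0) →
      ∀ x, (A 0).mulVec (deriv (fun y => ∑ j, U y j) x)
        + ((τ + σ) / τ) • (τ • (1 : Matrix (Fin n) (Fin n) ℂ)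
            + ∑ j ∈ Finset.univ.erase (0 : Fin d),
                (Complex.I * η j) • A j).mulVec (∑ j, U x j) = 0) ∧
    (∀ W : ℝ → Fin n → ℂ, Differentiable ℝ W →
      (∀ x, (A 0).mulVec (deriv W x)
        + ((τ + σ) / τ) • (τ • (1 : Matrix (Fin n) (Fin n) ℂ)
            + ∑ j ∈ Finset.univ.erase (0 : Fin d),
                (Complex.I * η j) • A j).mulVec (W x) = 0) →
      ∀ U : ℝ → Fin d → Fin n → ℂ,
        (U = fun x j => if j = 0 then
            W x + ∑ k ∈ Finset.univ.erase (0 : Fin d),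
              (Complex.I * η k / τ) • (A k).mulVec (W x)
          else (-(Complex.I * η j / τ)) • (A j).mulVec (W x)) →
        ((∀ x, (A 0).mulVec (deriv (fun y => ∑ j, U y j) x)
            + (τ + σ) • U x 0 = 0) ∧
          ∀ j : Fin d, j ≠ 0 → ∀ x,
            τ • U x j + (Complex.I * η j) • (A j).mulVec (∑ k, U x k) = 0)) := by
  set c : Fin d → ℂ := fun j => Complex.I * η j
  refine ⟨fun U _ hfirst hsplit x => ?_, fun W _ hode U hU => ?_⟩
  · have hL := div_smul_tangentialSymbol_mulVec_sum (c := c) (A := A) hτ (τ + σ) (hsplit · · x)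
    rw [tangentialSymbol] at hL
    rw [hL]
    exact hfirst x
  · replace hU : U = fun x => splitOfSum τ c A 0 (W x) := hU
    subst hU
    have hsum : (fun y => ∑ j, splitOfSum τ c A 0 (W y) j) = W :=
      funext fun y => sum_splitOfSum τ c A 0 (W y)
    refine ⟨fun x => ?_, fun j hj x => splitOfSum_split hτ c A (W x) hj⟩
    have hL := div_smul_tangentialSymbol_mulVec_sum hτ (τ + σ)
      fun j (hj : j ≠ 0) => splitOfSum_split hτ c A (W x) hj
    rw [sum_splitOfSum, tangentialSymbol] at hL
    rw [hsum, ← hL]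
    exact hode x
end

section
/- Let A_1 = diag(1,-1), A_2 = [[0,1],[1,0]], τ ∈ ℂ with Re τ > 0, η ∈ ℝ, and ρ = √(τ²+η²) with Re ρ > 0. Then det(τI + ρA_1 + iηA_2) = 0, the kernel of L(τ,ρ,iη) = [[τ+ρ, iη],[iη, τ-ρ]] is spanned by Φ(τ,η) = (-iη, τ+ρ), and ρ is the unique root in {Re ρ > 0} of det L(τ,ρ,iη) = τ² - ρ² + η² = 0. Moreover if P = P* ≥ 0 is a 2×2 Hermitian matrix such that Φ(τ,η) is an eigenvector of A_1^{-1}P for all η ∈ ℝ (and some fixed Re τ > 0), then P = 0. -/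
/-!
For the last claim, `A₁⁻¹P = !![P₀₀, P₀₁; -P₁₀, -P₁₁]`. At `η = 0` the vector `Φ = (0, 2τ)` is an
eigenvector, which forces `P₀₁ = 0`, hence `P₁₀ = 0` since `P` is Hermitian. At `η = 1` both
entries of `Φ` are nonzero, so the now diagonal `A₁⁻¹P` is scalar: `P₀₀ = -P₁₁`. Both diagonal
entries of `P ≥ 0` are nonnegative, so they vanish.
-/

open Matrix
open scoped ComplexOrder

namespace Complex

lemma add_ne_zero_of_re_pos {z w : ℂ} (hz : 0 < z.re) (hw : 0 < w.re) : z + w ≠ 0 :=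
  ne_zero_of_re_pos (by rw [add_re]; positivity)

lemma eq_of_sq_eq_sq_of_re_pos {z w : ℂ} (h : z ^ 2 = w ^ 2) (hz : 0 < z.re) (hw : 0 < w.re) :
    z = w := by
  refine (sq_eq_sq_iff_eq_or_eq_neg.mp h).resolve_right fun hzw => ?_
  rw [hzw, neg_re] at hz
  linarith

lemma exists_sq_eq_and_re_pos {z : ℂ} (hz : z ∈ slitPlane) : ∃ w : ℂ, w ^ 2 = z ∧ 0 < w.re := by
  refine ⟨z ^ (2⁻¹ : ℂ), cpow_ofNat_inv_pow z 2, ?_⟩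
  rw [cpow_inv_two_re, Real.sqrt_pos]
  rcases mem_slitPlane_iff.mp hz with hre | him
  · positivity
  · linarith [neg_abs_le z.re, abs_re_lt_norm.mpr him]

lemma sq_add_ofReal_sq_mem_slitPlane {τ : ℂ} (hτ : 0 < τ.re) (η : ℝ) :
    τ ^ 2 + (η : ℂ) ^ 2 ∈ slitPlane := by
  rw [mem_slitPlane_iff]
  by_cases him : τ.im = 0
  · left
    simp only [add_re, sq, mul_re, him, ofReal_re, ofReal_im]
    nlinarith
  · right
    simp only [add_im, sq, mul_im, ofReal_re, ofReal_im]
    intro h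
    have : τ.re * τ.im = 0 := by linarith
    simp_all [hτ.ne']

end Complex

lemma det_wave_symbol (τ ρ : ℂ) (η : ℝ) :
    (!![τ + ρ, Complex.I * η; Complex.I * η, τ - ρ]).det = τ ^ 2 - ρ ^ 2 + (η : ℂ) ^ 2 := by
  rw [det_fin_two_of]
  linear_combination (-(η : ℂ) ^ 2) * Complex.I_sq

namespace Matrix

lemma mulVec_fin_two_eq_zero_iff {K : Type*} [Field K] {a b c d : K}
    (hdet : !![a, b; c, d].det = 0) (ha : a ≠ 0) (v : Fin 2 → K) :
    !![a, b; c, d] *ᵥ v = 0 ↔ ∃ k : K, v = k • ![-b, a] := by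
  rw [det_fin_two_of] at hdet
  simp only [mulVec_fin_two, of_apply, cons_val', cons_val_zero, cons_val_one, empty_val',
    cons_val_fin_one, funext_iff, Fin.forall_fin_two, Pi.zero_apply, Pi.smul_apply,
    smul_eq_mul, mul_neg]
  constructor
  · rintro ⟨hrow, -⟩
    refine ⟨v 1 / a, ?_, by field_simp⟩
    field_simp
    linear_combination hrow
  · rintro ⟨k, hv₀, hv₁⟩
    rw [hv₀, hv₁]
    exact ⟨by ring, by linear_combination k * hdet⟩

lemma inv_one_neg_one_mul {R : Type*} [CommRing R] (P : Matrix (Fin 2) (Fin 2) R) :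
    (!![(1 : R), 0; 0, -1])⁻¹ * P = !![P 0 0, P 0 1; -P 1 0, -P 1 1] := by
  have hinv : (!![(1 : R), 0; 0, -1])⁻¹ = !![1, 0; 0, -1] :=
    inv_eq_left_inv (by simp [one_fin_two])
  rw [hinv, eta_fin_two P]
  simp

lemma PosSemidef.eq_zero_of_eigenvectors_of_inv_one_neg_one_mul {𝕜 : Type*} [RCLike 𝕜]
    {P : Matrix (Fin 2) (Fin 2) 𝕜} (hP : P.PosSemidef) {b x y c₁ c₂ : 𝕜}
    (hb : b ≠ 0) (hx : x ≠ 0) (hy : y ≠ 0)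
    (h₁ : ((!![(1 : 𝕜), 0; 0, -1])⁻¹ * P) *ᵥ ![0, b] = c₁ • ![0, b])
    (h₂ : ((!![(1 : 𝕜), 0; 0, -1])⁻¹ * P) *ᵥ ![x, y] = c₂ • ![x, y]) :
    P = 0 := by
  rw [inv_one_neg_one_mul, mulVec_fin_two] at h₁ h₂
  simp only [of_apply, cons_val', cons_val_zero, cons_val_one, empty_val', cons_val_fin_one,
    smul_cons, smul_eq_mul, smul_empty, vecCons_inj] at h₁ h₂
  have h01 : P 0 1 = 0 := by simpa [hb] using h₁.1
  have h10 : P 1 0 = 0 := by rw [← hP.isHermitian.apply, h01, star_zero]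
  have h00 : P 0 0 = c₂ := mul_right_cancel₀ hx (by simpa [h01] using h₂.1)
  have h11 : -P 1 1 = c₂ := mul_right_cancel₀ hy (by simpa [h10] using h₂.2.1)
  have h00' : P 0 0 = 0 :=
    le_antisymm (by rw [h00, ← h11]; exact neg_nonpos.mpr hP.diag_nonneg) hP.diag_nonneg
  rw [eta_fin_two P, h00', h01, h10, neg_eq_zero.mp (h11.trans (h00.symm.trans h00'))]
  exact (eta_fin_two 0).symm

end Matrix

open Complex in
/-- For the 2D wave system `L(τ,ρ,iη) = τI + ρA₁ + iηA₂` with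
`A₁ = diag(1,-1)`, `A₂ = [[0,1],[1,0]]`, `Re τ > 0`, `η ∈ ℝ`, and
`ρ = √(τ²+η²)`, `Re ρ > 0`: `det L(τ,ρ',iη) = τ² - ρ'² + η²`, `ρ` is the unique
root with positive real part, the kernel of `L(τ,ρ,iη)` is spanned by
`Φ(τ,η) = (-iη, τ+ρ)`; moreover a Hermitian `P ≥ 0` such that `Φ(τ,η)` is an
eigenvector of `A₁⁻¹P` for all `η ∈ ℝ` must vanish. -/
theorem wave_layer_no_perfect_absorption (τ : ℂ) (hτ : 0 < τ.re)
    (η : ℝ) (ρ : ℂ) (hρ : ρ ^ 2 = τ ^ 2 + (η : ℂ) ^ 2) (hρre : 0 < ρ.re) :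
    (∀ ρ' : ℂ,
      (!![τ + ρ', Complex.I * η; Complex.I * η, τ - ρ']).det
        = τ ^ 2 - ρ' ^ 2 + (η : ℂ) ^ 2) ∧
    (!![τ + ρ, Complex.I * η; Complex.I * η, τ - ρ]).det = 0 ∧
    (∀ v : Fin 2 → ℂ,
      (!![τ + ρ, Complex.I * η; Complex.I * η, τ - ρ]).mulVec v = 0 ↔
        ∃ c : ℂ, v = c • ![-(Complex.I * η), τ + ρ]) ∧
    (∀ ρ' : ℂ, 0 < ρ'.re → τ ^ 2 - ρ' ^ 2 + (η : ℂ) ^ 2 = 0 → ρ' = ρ) ∧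
    (∀ P : Matrix (Fin 2) (Fin 2) ℂ, P.PosSemidef →
      (∀ η' : ℝ, ∀ ρ' : ℂ, ρ' ^ 2 = τ ^ 2 + (η' : ℂ) ^ 2 → 0 < ρ'.re →
        ∃ c : ℂ, ((!![(1 : ℂ), 0; 0, -1])⁻¹ * P).mulVec ![-(Complex.I * η'), τ + ρ']
          = c • ![-(Complex.I * η'), τ + ρ']) →
      P = 0) := by
  have hdet : (!![τ + ρ, I * η; I * η, τ - ρ]).det = 0 := by
    rw [det_wave_symbol, hρ]
    ring
  refine ⟨(det_wave_symbol τ · η), hdet,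
    mulVec_fin_two_eq_zero_iff hdet (add_ne_zero_of_re_pos hτ hρre),
    fun ρ' hρ' hroot => eq_of_sq_eq_sq_of_re_pos (by linear_combination -hroot - hρ) hρ' hρre, ?_⟩
  intro P hP hΦ
  obtain ⟨c₀, hΦ₀⟩ := hΦ 0 τ (by simp) hτ
  obtain ⟨ρ₁, hρ₁, hρ₁re⟩ := exists_sq_eq_and_re_pos (sq_add_ofReal_sq_mem_slitPlane hτ 1)
  obtain ⟨c₁, hΦ₁⟩ := hΦ 1 ρ₁ hρ₁ hρ₁re
  rw [ofReal_zero, mul_zero, neg_zero] at hΦ₀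
  exact hP.eq_zero_of_eigenvectors_of_inv_one_neg_one_mul (add_ne_zero_of_re_pos hτ hτ)
    (by simp) (add_ne_zero_of_re_pos hτ hρ₁re) hΦ₀ hΦ₁
end
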